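/- arXiv:1909.04650 — 2 statements merged into one kernel-verified Lean document; each statement's English description precedes it below -/
import Mathlib

section
/- Let 0 ≤ l < n and z ∈ P_n with z_1 = ⋯ = z_{l+1} = c. For u ∈ ℤ^n_{≥0}, let x be the weakly decreasing rearrangement of u. Then the monomial e^u lies in I_z but does not lie in I_{succ(z,l)} if and only if x_i = z_i for all i ≥ l+1 and x_i ≥ c for all 1 ≤ i ≤ l. -/
open MvPolynomial

/-- `PartitionOn n x` : `x` is a weakly decreasing sequence of naturals (0-based
indexing, so `x 0` is the first part `x_1`) vanishing from index `n` on; this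
encodes a partition in `P_n ⊆ ℤ^n_{≥0}`. -/
def PartitionOn (n : ℕ) (x : ℕ → ℕ) : Prop :=
  (∀ i j : ℕ, i ≤ j → x j ≤ x i) ∧ ∀ i : ℕ, n ≤ i → x i = 0

/-- A partition: a weakly decreasing, eventually zero sequence of naturals. -/
def IsPartitionF (x : ℕ → ℕ) : Prop :=
  (∀ i j : ℕ, i ≤ j → x j ≤ x i) ∧ ∃ n : ℕ, ∀ i : ℕ, n ≤ i → x i = 0

/-- The conjugate partition (1-based index): `conj x i = #{j : x_j ≥ i}`. -/
noncomputable def conj (x : ℕ → ℕ) (i : ℕ) : ℕ :=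
  Set.ncard { j : ℕ | i ≤ x j }

/-- The truncation `x(c)`, whose parts are `min (x i) c`. -/
def trunc (x : ℕ → ℕ) (c : ℕ) : ℕ → ℕ := fun i => min (x i) c

/-- The rectangular partition `(b^a)`: `a` parts equal to `b`. -/
def rect (a b : ℕ) : ℕ → ℕ := fun i => if i < a then b else 0

/-- The size `|x| = x_1 + ⋯ + x_n` of a partition supported in the first `n` indices. -/
def psize (n : ℕ) (x : ℕ → ℕ) : ℕ := ∑ i ∈ Finset.range n, x i

/-- The set `Z(X)` : pairs `(z, l)` with `z ∈ P_n`, `l ≥ 0` such that, writing `c = z_1`: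
(1) there is `x ∈ X` with `x(c) ≤ z` and `x'_{c+1} ≤ l+1`, and
(2) every `x ∈ X` with `x(c) ≤ z` and `x'_{c+1} ≤ l+1` has `x'_{c+1} = l+1`. -/
noncomputable def ZX (n : ℕ) (X : Set (ℕ → ℕ)) : Set ((ℕ → ℕ) × ℕ) :=
  { zl | PartitionOn n zl.1 ∧
    (∃ x ∈ X, trunc x (zl.1 0) ≤ zl.1 ∧ conj x (zl.1 0 + 1) ≤ zl.2 + 1) ∧
    ∀ x ∈ X, trunc x (zl.1 0) ≤ zl.1 → conj x (zl.1 0 + 1) ≤ zl.2 + 1 →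
      conj x (zl.1 0 + 1) = zl.2 + 1 }

/-- The monomial `e^u = e_1^{u_1} ⋯ e_n^{u_n}` in `S = k[e_1, …, e_n]`. -/
noncomputable def mon (k : Type*) [Field k] (n : ℕ) (u : ℕ → ℕ) : MvPolynomial (Fin n) k :=
  ∏ i : Fin n, (X i : MvPolynomial (Fin n) k) ^ u (i : ℕ)

/-- The ideal `I_x` generated by the `S_n`-orbit of the monomial `e^x`. -/
noncomputable def Ipart (k : Type*) [Field k] (n : ℕ) (x : ℕ → ℕ) :
    Ideal (MvPolynomial (Fin n) k) :=
  Ideal.span { f | ∃ σ : Equiv.Perm (Fin n),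
    f = ∏ i : Fin n, (X i : MvPolynomial (Fin n) k) ^ x ((σ i : Fin n) : ℕ) }

/-- The ideal `I_X = Σ_{x ∈ X} I_x`. -/
noncomputable def IXset (k : Type*) [Field k] (n : ℕ) (Xs : Set (ℕ → ℕ)) :
    Ideal (MvPolynomial (Fin n) k) :=
  ⨆ x ∈ Xs, Ipart k n x

/-- `succ(z,l) = {x ∈ P_n : x ≥ z and x_i > z_i for some i > l}` (1-based `i > l`
corresponds to 0-based index `≥ l`). -/
def succSet (n l : ℕ) (z : ℕ → ℕ) : Set (ℕ → ℕ) :=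
  { x | PartitionOn n x ∧ (∀ i, z i ≤ x i) ∧ ∃ i, l ≤ i ∧ z i < x i }

/-- `Y_{z,l} = {((z_1+1)^{l+1})} ∪ {((z_i+1)^i) : l+1 < i ≤ n, z_{i-1} > z_i}`
(here `i = m+2` in 1-based indexing). -/
def Yset (n : ℕ) (z : ℕ → ℕ) (l : ℕ) : Set (ℕ → ℕ) :=
  {rect (l+1) (z 0 + 1)} ∪
    { y | ∃ m : ℕ, l ≤ m ∧ m + 2 ≤ n ∧ z (m+1) < z m ∧ y = rect (m+2) (z (m+1) + 1) }

/-- `Y'_{z,l} = {((z_i+1)^i) : l+1 < i ≤ n, z_{i-1} > z_i}`. -/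
def Y'set (n : ℕ) (z : ℕ → ℕ) (l : ℕ) : Set (ℕ → ℕ) :=
  { y | ∃ m : ℕ, l ≤ m ∧ m + 2 ≤ n ∧ z (m+1) < z m ∧ y = rect (m+2) (z (m+1) + 1) }

/-- An ideal `I` is symmetric shifted if for every monomial `e^x ∈ I` with `x ∈ P_n`
and every `1 < k ≤ n` (0-based `0 < j < n`) with `x_1 > x_k`, one has `e^x · e_k/e_1 ∈ I`. -/
def SymShifted (k : Type*) [Field k] (n : ℕ) (I : Ideal (MvPolynomial (Fin n) k)) : Prop :=
  ∀ x : ℕ → ℕ, PartitionOn n x → mon k n x ∈ I →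
    ∀ j : ℕ, 0 < j → j < n → x j < x 0 →
      mon k n (fun i => if i = 0 then x 0 - 1 else if i = j then x j + 1 else x i) ∈ I

/-- The partitioning problem `BP(d, C; w)` is `r`-feasible: the multiset of `d` copies of
each of `w_1, …, w_n` (balls indexed by `Fin d × Fin n`, ball `(j,i)` of weight `w_i`)
can be distributed into bins `B_1, …, B_n` of exactly `d` balls each so that
`w(B_i) ≤ C_i` for all `i = r+1, …, n` (0-based bins `≥ r`). -/
def RFeasible (n d r : ℕ) (C w : ℕ → ℕ) : Prop :=
  ∃ A : Fin d × Fin n → Fin n,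
    (∀ b : Fin n, (Finset.univ.filter fun p => A p = b).card = d) ∧
    ∀ b : Fin n, r ≤ (b : ℕ) →
      (∑ p ∈ Finset.univ.filter (fun p => A p = b), w ((p.2 : Fin n) : ℕ)) ≤ C (b : ℕ)

/-- `X_w^d = {x ∈ P_n : x = σ_1(w) + ⋯ + σ_d(w) for some σ_1, …, σ_d ∈ S_n}`. -/
def XwPow (n d : ℕ) (w : ℕ → ℕ) : Set (ℕ → ℕ) :=
  { x | PartitionOn n x ∧ ∃ σ : Fin d → Equiv.Perm (Fin n),
      ∀ i : Fin n, x (i : ℕ) = ∑ j : Fin d, w ((σ j i : Fin n) : ℕ) }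

/-- `Y_n`: the elements of `Y` with at most `n` nonzero parts, regarded in `P_n`. -/
def restr (Y : Set (ℕ → ℕ)) (n : ℕ) : Set (ℕ → ℕ) :=
  { x ∈ Y | ∀ i, n ≤ i → x i = 0 }


/-
A monomial lies in a monomial ideal iff it is divisible by one of the generators, so
`e^u ∈ I_z` iff some permutation of `z` is dominated by `u`; by pigeonhole this happens iff
`z ≤ x` for the sorted rearrangement `x` of `u`. Likewise `e^u ∈ I_{succ(z,l)}` iff `x`
dominates an element of `succ(z,l)`, which (for `z ≤ x`, taking `x` itself) means
`x_i > z_i` for some `i > l`. Since `z` is constant equal to `c` on its first `l+1` parts,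
the two conditions together say exactly that `x` agrees with `z` from index `l+1` on and is
at least `c` before.
-/

lemma prod_X_pow_eq_monomial_equivFunOnFinite {R σ : Type*} [CommSemiring R] [Fintype σ]
    (g : σ → ℕ) :
    ∏ i, (X i : MvPolynomial σ R) ^ g i = monomial (Finsupp.equivFunOnFinite.symm g) 1 := by
  rw [monomial_eq, C_1, one_mul, Finsupp.prod_fintype _ _ fun _ => pow_zero _]
  rfl

lemma monomial_mem_span_monomial_image_iff {R σ : Type*} [CommSemiring R] [Nontrivial R]
    {s : σ →₀ ℕ} {T : Set (σ →₀ ℕ)} :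
    monomial s (1 : R) ∈ Ideal.span ((fun t => monomial t (1 : R)) '' T) ↔ ∃ t ∈ T, t ≤ s := by
  classical
  rw [mem_ideal_span_monomial_image, support_monomial, if_neg one_ne_zero]
  simp only [Finset.mem_singleton, forall_eq]

def orbitExps (n : ℕ) (z : ℕ → ℕ) : Set (Fin n →₀ ℕ) :=
  Set.range fun τ : Equiv.Perm (Fin n) => Finsupp.equivFunOnFinite.symm fun i => z (τ i)

lemma mon_eq_monomial (k : Type*) [Field k] (n : ℕ) (u : ℕ → ℕ) :
    mon k n u = monomial (Finsupp.equivFunOnFinite.symm fun i : Fin n => u i) 1 :=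
  prod_X_pow_eq_monomial_equivFunOnFinite _

lemma Ipart_eq_span (k : Type*) [Field k] (n : ℕ) (z : ℕ → ℕ) :
    Ipart k n z = Ideal.span ((fun s => monomial s (1 : k)) '' orbitExps n z) := by
  rw [Ipart, orbitExps, ← Set.range_comp]
  congr 1
  ext f
  simp only [Set.mem_ofPred_eq, Set.mem_range, Function.comp_apply,
    prod_X_pow_eq_monomial_equivFunOnFinite, eq_comm]

lemma IXset_eq_span (k : Type*) [Field k] (n : ℕ) (Xs : Set (ℕ → ℕ)) :
    IXset k n Xs = Ideal.span ((fun s => monomial s (1 : k)) '' ⋃ y ∈ Xs, orbitExps n y) := by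
  rw [Set.image_iUnion₂, Ideal.span, Submodule.span_iUnion₂, IXset]
  simp_rw [Ipart_eq_span]

lemma mon_mem_Ipart_iff {k : Type*} [Field k] {n : ℕ} {z u : ℕ → ℕ} :
    mon k n u ∈ Ipart k n z ↔ ∃ τ : Equiv.Perm (Fin n), ∀ i : Fin n, z (τ i) ≤ u i := by
  simp only [mon_eq_monomial, Ipart_eq_span, monomial_mem_span_monomial_image_iff, orbitExps,
    Set.exists_range_iff, Finsupp.le_def, Finsupp.coe_equivFunOnFinite_symm]

lemma mon_mem_IXset_iff {k : Type*} [Field k] {n : ℕ} {Xs : Set (ℕ → ℕ)} {u : ℕ → ℕ} :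
    mon k n u ∈ IXset k n Xs ↔ ∃ y ∈ Xs, mon k n u ∈ Ipart k n y := by
  simp only [IXset_eq_span, Ipart_eq_span, mon_eq_monomial, monomial_mem_span_monomial_image_iff,
    Set.mem_iUnion₂]
  aesop

lemma le_of_perm_le_of_antitone {α : Type*} [Preorder α] {n : ℕ} {f g : Fin n → α}
    (hf : Antitone f) (hg : Antitone g) (π : Equiv.Perm (Fin n)) (h : ∀ j, f (π j) ≤ g j) :
    f ≤ g := by
  classical
  intro i
  -- `Ici i` and `π⁻¹ (Iic i)` have `(n - i) + (i + 1) > n` elements in total.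
  obtain ⟨j, hj⟩ : (Finset.Ici i ∩ (Finset.Iic i).map π.symm.toEmbedding).Nonempty := by
    apply Finset.inter_nonempty_of_card_lt_card_add_card (Finset.subset_univ _)
      (Finset.subset_univ _)
    simp only [Finset.card_univ, Fintype.card_fin, Fin.card_Ici, Finset.card_map, Fin.card_Iic]
    omega
  simp only [Finset.mem_inter, Finset.mem_Ici, Finset.mem_map_equiv, Equiv.symm_symm,
    Finset.mem_Iic] at hj
  calc f i ≤ f (π j) := hf hj.2
    _ ≤ g j := h j
    _ ≤ g i := hg hj.1

lemma mon_mem_Ipart_iff_le {k : Type*} [Field k] {n : ℕ} {z u x : ℕ → ℕ}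
    (hz : PartitionOn n z) (hx : Antitone x) {σ : Equiv.Perm (Fin n)}
    (hσ : ∀ i : Fin n, x i = u (σ i)) :
    mon k n u ∈ Ipart k n z ↔ z ≤ x := by
  rw [mon_mem_Ipart_iff]
  constructor
  · rintro ⟨τ, hτ⟩ i
    by_cases hi : i < n
    · refine le_of_perm_le_of_antitone (f := fun j : Fin n => z j) (g := fun j : Fin n => x j)
        (fun _ _ hab => hz.1 _ _ hab) (fun _ _ hab => hx hab) (σ.trans τ) (fun j => ?_) ⟨i, hi⟩
      simpa [hσ j] using hτ (σ j)
    · simp [hz.2 i (not_lt.mp hi)]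
  · intro hzx
    refine ⟨σ.symm, fun i => ?_⟩
    simpa [hσ] using hzx (σ.symm i)

lemma exists_mem_succSet_le_iff {n l : ℕ} {z x : ℕ → ℕ} (hx : PartitionOn n x) (hzx : z ≤ x) :
    (∃ y ∈ succSet n l z, y ≤ x) ↔ ∃ i, l ≤ i ∧ z i < x i := by
  constructor
  · rintro ⟨y, ⟨-, -, i, hli, hzy⟩, hyx⟩
    exact ⟨i, hli, hzy.trans_le (hyx i)⟩
  · rintro ⟨i, hli, hzxi⟩
    exact ⟨x, ⟨hx, hzx, i, hli, hzxi⟩, le_rfl⟩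

theorem stmt_9_general {k : Type*} [Field k] (n l : ℕ)
    (z : ℕ → ℕ) (hz : PartitionOn n z) (hzflat : ∀ i ≤ l, z i = z 0)
    (u : ℕ → ℕ)
    (x : ℕ → ℕ) (hx : PartitionOn n x)
    (σ : Equiv.Perm (Fin n)) (hσ : ∀ i : Fin n, x (i : ℕ) = u ((σ i : Fin n) : ℕ)) :
    (mon k n u ∈ Ipart k n z ∧ mon k n u ∉ IXset k n (succSet n l z)) ↔
      (∀ i, l ≤ i → x i = z i) ∧ ∀ i < l, z 0 ≤ x i := by
  have hsucc : (∃ y ∈ succSet n l z, mon k n u ∈ Ipart k n y) ↔ ∃ y ∈ succSet n l z, y ≤ x :=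
    exists_congr fun y => and_congr_right fun hy => mon_mem_Ipart_iff_le hy.1 hx.1 hσ
  rw [mon_mem_Ipart_iff_le hz hx.1 hσ, mon_mem_IXset_iff, hsucc]
  constructor
  · rintro ⟨hzx, hnot⟩
    rw [exists_mem_succSet_le_iff hx hzx] at hnot
    push Not at hnot
    exact ⟨fun i hi => le_antisymm (hnot i hi) (hzx i),
      fun i hi => hzflat i hi.le ▸ hzx i⟩
  · rintro ⟨htail, hhead⟩
    have hzx : z ≤ x := fun i =>
      (lt_or_ge i l).elim (fun hi => (hzflat i hi.le).trans_le (hhead i hi))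
        (fun hi => (htail i hi).ge)
    refine ⟨hzx, ?_⟩
    rw [exists_mem_succSet_le_iff hx hzx]
    rintro ⟨i, hi, hlt⟩
    exact hlt.ne (htail i hi).symm

theorem stmt_9 {k : Type*} [Field k] (n l : ℕ) (hl : l < n)
    (z : ℕ → ℕ) (hz : PartitionOn n z) (hzflat : ∀ i ≤ l, z i = z 0)
    (u : ℕ → ℕ) (hu : ∀ i, n ≤ i → u i = 0)
    (x : ℕ → ℕ) (hx : PartitionOn n x)
    (σ : Equiv.Perm (Fin n)) (hσ : ∀ i : Fin n, x (i : ℕ) = u ((σ i : Fin n) : ℕ)) :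
    (mon k n u ∈ Ipart k n z ∧ mon k n u ∉ IXset k n (succSet n l z)) ↔
      (∀ i, l ≤ i → x i = z i) ∧ ∀ i < l, z 0 ≤ x i :=
  stmt_9_general n l z hz hzflat u x hx σ hσ
end

section
/- Let r ≥ 1 and let X ⊆ P_n be a nonempty set of partitions with |x| = r for all x ∈ X. If every (z,l) ∈ Z(X) satisfies |z| + l + 1 ≤ r, then the ideal I_X is symmetric shifted. -/
open MvPolynomial

/-!
A monomial `e^y` lies in `I_X` iff some `x ∈ X` is dominated by a rearrangement of `y`; for a
partition `y` this just means `x ≤ y`. Moving a box from the first row of a partition `x` to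
row `j` gives, after sorting, a partition `u` with `|u| = |x| ≥ r`, `u_1 ≥ x_1 - 1` and
`u(x_1 - 1) ≥ x(x_1 - 1)`. Suppose no element of `X` lies below `u`. For a partition `z` with
`c = z_1`, an element `v ∈ X` with `v(c) ≤ z` minimising `v'_{c+1}` then yields
`(z, v'_{c+1} - 1) ∈ Z(X)`, hence `|z| + v'_{c+1} ≤ r`. Applied to `z = u(x_1 - 1)`, this says that
`v` has no more rows of length `≥ x_1` than `u`, so `v(u_1) ≤ u`; applied to `z = u`, it
contradicts `|u| ≥ r`.
-/

section Conjugate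

variable {n : ℕ} {v : ℕ → ℕ}

lemma lt_conj_iff (hv : PartitionOn n v) {m : ℕ} (hm : 0 < m) (i : ℕ) :
    i < conj v m ↔ m ≤ v i := by
  have hfin : {j | m ≤ v j}.Finite :=
    (Set.finite_Iio n).subset fun j (hj : m ≤ v j) => by
      by_contra hjn
      have := hv.2 j (not_lt.1 hjn)
      omega
  constructor
  · intro hi
    by_contra hvi
    have hsub : {j | m ≤ v j} ⊆ Set.Iio i := fun j (hj : m ≤ v j) =>
      lt_of_not_ge fun hij => hvi (hj.trans (hv.1 _ _ hij))
    exact hi.not_ge ((Set.ncard_le_ncard hsub (Set.finite_Iio i)).trans_eq (Set.ncard_Iio_nat i))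
  · intro hvi
    have hsub : Set.Iic i ⊆ {j | m ≤ v j} := fun j hj => hvi.trans (hv.1 _ _ hj)
    exact (Set.ncard_Iic_nat i).symm.trans_le (Set.ncard_le_ncard hsub hfin)

lemma PartitionOn.trunc (hv : PartitionOn n v) (c : ℕ) : PartitionOn n (trunc v c) :=
  ⟨fun i j hij => min_le_min_right c (hv.1 i j hij),
    fun i hi => by simp [_root_.trunc, hv.2 i hi]⟩

lemma trunc_eq_self_of_conj_eq_zero (hv : PartitionOn n v) {c : ℕ} (h : conj v (c + 1) = 0) :
    trunc v c = v :=
  funext fun i => min_eq_left <| by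
    have := (lt_conj_iff hv c.add_one_pos i).not
    omega

lemma psize_eq_psize_trunc_add_conj (hv : PartitionOn n v) {c : ℕ} (hc : v 0 ≤ c + 1) :
    psize n v = psize n (trunc v c) + conj v (c + 1) := by
  have hterm : ∀ i, v i = trunc v c i + if i < conj v (c + 1) then 1 else 0 := by
    intro i
    have := hv.1 0 i i.zero_le
    have := lt_conj_iff hv c.add_one_pos i
    simp only [_root_.trunc]
    split_ifs <;> omega
  have hconj : conj v (c + 1) ≤ n := by
    have := (lt_conj_iff hv c.add_one_pos n).not
    have := hv.2 n le_rfl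
    omega
  have hfilter : (Finset.range n).filter (· < conj v (c + 1)) = Finset.range (conj v (c + 1)) := by
    ext i
    simp only [Finset.mem_filter, Finset.mem_range]
    omega
  rw [psize, psize, Finset.sum_congr rfl fun i _ => hterm i, Finset.sum_add_distrib,
    Finset.sum_boole, hfilter, Finset.card_range]
  simp

end Conjugate

section Regularity

variable {n r : ℕ} {Xs : Set (ℕ → ℕ)}

lemma exists_psize_add_conj_le (hXs : ∀ x ∈ Xs, PartitionOn n x)
    (hreg : ∀ zl ∈ ZX n Xs, psize n zl.1 + zl.2 + 1 ≤ r)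
    {z w : ℕ → ℕ} (hz : PartitionOn n z) (hnot : ∀ v ∈ Xs, ¬v ≤ z)
    (hw : w ∈ Xs) (hwz : trunc w (z 0) ≤ z) :
    ∃ v ∈ Xs, trunc v (z 0) ≤ z ∧ 0 < conj v (z 0 + 1) ∧
      psize n z + conj v (z 0 + 1) ≤ r := by
  set S := {v | v ∈ Xs ∧ trunc v (z 0) ≤ z}
  set v := Function.argminOn (fun v => conj v (z 0 + 1)) S ⟨w, hw, hwz⟩
  obtain ⟨hv, hvz⟩ : v ∈ S := Function.argminOn_mem _ _ _
  have hmin : ∀ v' ∈ Xs, trunc v' (z 0) ≤ z → conj v (z 0 + 1) ≤ conj v' (z 0 + 1) :=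
    fun v' hv' hv'z => Function.argminOn_le (fun v => conj v (z 0 + 1)) S ⟨hv', hv'z⟩
  have hpos : 0 < conj v (z 0 + 1) := by
    by_contra h0
    exact hnot v hv (trunc_eq_self_of_conj_eq_zero (hXs v hv) (c := z 0) (by omega) ▸ hvz)
  have hZ : (z, conj v (z 0 + 1) - 1) ∈ ZX n Xs := by
    refine ⟨hz, ⟨v, hv, hvz, ?_⟩, fun v' hv' hv'z hle => ?_⟩
    · dsimp only
      omega
    · dsimp only at hv'z hle ⊢
      have := hmin v' hv' hv'z
      omega
  have := hreg _ hZ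
  exact ⟨v, hv, hvz, hpos, by simp only at this; omega⟩

lemma exists_le_of_trunc_le (hXs : ∀ x ∈ Xs, PartitionOn n x)
    (hreg : ∀ zl ∈ ZX n Xs, psize n zl.1 + zl.2 + 1 ≤ r)
    {u w : ℕ → ℕ} {c : ℕ} (hu : PartitionOn n u) (hru : r ≤ psize n u)
    (hcu : c ≤ u 0) (huc : u 0 ≤ c + 1) (hw : w ∈ Xs) (hwu : trunc w c ≤ u) :
    ∃ v ∈ Xs, v ≤ u := by
  by_contra! hnot
  have hz0 : trunc u c 0 = c := min_eq_right hcu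
  have hnot' : ∀ v ∈ Xs, ¬v ≤ trunc u c :=
    fun v hv hvz => hnot v hv (hvz.trans fun i => min_le_left _ _)
  obtain ⟨v, hv, hvz, -, hbound⟩ := exists_psize_add_conj_le hXs hreg (hu.trunc c) hnot' hw
    (by rw [hz0]; exact fun i => le_min (hwu i) (min_le_right _ _))
  rw [hz0] at hvz hbound
  have hsplit := psize_eq_psize_trunc_add_conj hu huc
  have hvu : trunc v (u 0) ≤ u := by
    intro i
    by_cases hvi : c + 1 ≤ v i
    · have hi := (lt_conj_iff (hXs v hv) c.add_one_pos i).2 hvi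
      have := (lt_conj_iff hu c.add_one_pos i).1 (by omega)
      exact (min_le_right _ _).trans (huc.trans this)
    · calc trunc v (u 0) i ≤ trunc v c i := by simp only [trunc]; omega
        _ ≤ trunc u c i := hvz i
        _ ≤ u i := min_le_left _ _
  obtain ⟨v', -, -, hpos, hbound'⟩ := exists_psize_add_conj_le hXs hreg hu hnot hv hvu
  omega

end Regularity

lemma PartitionOn.le_of_comp_perm_le {n : ℕ} {w x : ℕ → ℕ} (hw : PartitionOn n w)
    (hx : PartitionOn n x) (σ : Equiv.Perm (Fin n)) (h : ∀ i : Fin n, w (σ i) ≤ x i) :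
    w ≤ x := by
  intro i
  change w i ≤ x i
  by_cases hi : i < n
  swap
  · simp [hw.2 i (not_lt.1 hi)]
  by_contra! hxw
  -- the `i + 1` indices in `σ⁻¹ (Iic i)` would all carry parts of `x` exceeding `x i`
  have hsub :
      (Finset.Iic (⟨i, hi⟩ : Fin n)).map σ.symm.toEmbedding ⊆ Finset.Iio ⟨i, hi⟩ := by
    intro t ht
    simp only [Finset.mem_map_equiv, Equiv.symm_symm, Finset.mem_Iic] at ht
    rw [Finset.mem_Iio]
    by_contra! hit
    have := hw.1 _ _ (show ((σ t : Fin n) : ℕ) ≤ i from ht)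
    have := hx.1 _ _ (show i ≤ (t : ℕ) from hit)
    have := h t
    omega
  have := Finset.card_le_card hsub
  simp only [Finset.card_map, Fin.card_Iic, Fin.card_Iio] at this
  omega

section Monomial

variable {k : Type*} [Field k] {n : ℕ}

lemma prod_univ_X_pow_eq_monomial (f : Fin n → ℕ) :
    ∏ i, (X i : MvPolynomial (Fin n) k) ^ f i = monomial (Finsupp.equivFunOnFinite.symm f) 1 := by
  rw [monomial_eq, Finsupp.prod_fintype _ _ fun i => pow_zero _]
  simp

lemma IXset_eq_span_s10 (Xs : Set (ℕ → ℕ)) :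
    IXset k n Xs = Ideal.span ((fun d => monomial d (1 : k)) ''
      {d | ∃ w ∈ Xs, ∃ σ : Equiv.Perm (Fin n), ∀ i, d i = w (σ i)}) := by
  simp only [IXset, Ipart, Ideal.span, ← Submodule.span_iUnion₂]
  congr 1
  ext f
  simp only [Set.mem_iUnion, Set.mem_image, Set.mem_ofPred_eq, prod_univ_X_pow_eq_monomial]
  constructor
  · rintro ⟨w, hw, σ, rfl⟩
    exact ⟨_, ⟨w, hw, σ, fun i => rfl⟩, rfl⟩
  · rintro ⟨d, ⟨w, hw, σ, hd⟩, rfl⟩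
    refine ⟨w, hw, σ, ?_⟩
    congr
    ext i
    simp [hd]

lemma mon_mem_IXset_iff_s10 (Xs : Set (ℕ → ℕ)) (y : ℕ → ℕ) :
    mon k n y ∈ IXset k n Xs ↔
      ∃ w ∈ Xs, ∃ σ : Equiv.Perm (Fin n), ∀ i : Fin n, w (σ i) ≤ y i := by
  classical
  rw [IXset_eq_span_s10, mon, prod_univ_X_pow_eq_monomial, mem_ideal_span_monomial_image,
    support_monomial, if_neg one_ne_zero]
  simp only [Finset.mem_singleton, forall_eq, Set.mem_ofPred_eq]
  constructor
  · rintro ⟨d, ⟨w, hw, σ, hd⟩, hdy⟩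
    exact ⟨w, hw, σ, fun i => by simpa [hd] using hdy i⟩
  · rintro ⟨w, hw, σ, hwy⟩
    exact ⟨Finsupp.equivFunOnFinite.symm fun i => w (σ i), ⟨w, hw, σ, fun i => rfl⟩,
      fun i => by simpa using hwy i⟩

end Monomial

def moveBox (x : ℕ → ℕ) (i j : ℕ) : ℕ → ℕ :=
  fun m => if m = i then x i - 1 else if m = j then x j + 1 else x m

section MoveBox

variable {n : ℕ} {x : ℕ → ℕ} {i j : ℕ}

lemma moveBox_apply_perm {τ : Equiv.Perm (Fin n)} (hτ : ∀ m, x (τ m) = x m) (i j m : Fin n) :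
    moveBox x (τ i) (τ j) (τ m) = moveBox x i j m := by
  simp only [moveBox, Fin.val_inj, EmbeddingLike.apply_eq_iff_eq, hτ]

lemma apply_swap_eq_self {a b : Fin n} (hab : x a = x b) (m : Fin n) :
    x (Equiv.swap a b m) = x m := by
  rcases eq_or_ne m a with rfl | hma
  · rw [Equiv.swap_apply_left, hab]
  rcases eq_or_ne m b with rfl | hmb
  · rw [Equiv.swap_apply_right, hab]
  · rw [Equiv.swap_apply_of_ne_of_ne hma hmb]

lemma psize_moveBox (hij : i ≠ j) (hi : i < n) (hj : j < n) (hxi : 0 < x i) :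
    psize n (moveBox x i j) = psize n x := by
  have hterm :
      ∀ m, moveBox x i j m + (if m = i then 1 else 0) = x m + if m = j then 1 else 0 := by
    intro m
    simp only [moveBox]
    split_ifs <;> subst_vars <;> omega
  have := Finset.sum_congr rfl fun m (_ : m ∈ Finset.range n) => hterm m
  simp only [Finset.sum_add_distrib, Finset.sum_ite_eq', Finset.mem_range, hi, hj,
    if_true] at this
  exact Nat.add_right_cancel this

lemma PartitionOn.moveBox (hx : PartitionOn n x) (hij : i < j) (hjn : j < n)
    (hi : x (i + 1) < x i) (hj : x j < x (j - 1)) (hji : x j + 2 ≤ x i) :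
    PartitionOn n (moveBox x i j) := by
  refine ⟨fun a b hab => antitone_nat_of_succ_le (fun m => ?_) hab, fun m hm => ?_⟩
  · have hm := hx.1 m (m + 1) m.le_succ
    have hmi : m = i → x (m + 1) < x m := by rintro rfl; exact hi
    have hmj : m + 1 = j → x j < x m := by rintro rfl; exact hj
    simp only [_root_.moveBox]
    split_ifs <;> grind
  · simp only [_root_.moveBox]
    rw [if_neg (by omega), if_neg (by omega), hx.2 m hm]

lemma trunc_le_moveBox : trunc x (x i - 1) ≤ moveBox x i j := by
  intro m
  simp only [trunc, moveBox]
  split_ifs <;> subst_vars <;> omega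

end MoveBox

section Rearrangement

variable {n : ℕ} {x : ℕ → ℕ} {j : ℕ}

lemma exists_perm_apply_eq_moveBox_of_add_one_eq (hjn : j < n) (hadj : x j + 1 = x 0) :
    ∃ τ : Equiv.Perm (Fin n), ∀ m : Fin n, x (τ m) = moveBox x 0 j m := by
  refine ⟨Equiv.swap ⟨0, by omega⟩ ⟨j, hjn⟩, fun m => ?_⟩
  simp only [moveBox, Equiv.swap_apply_def, Fin.ext_iff]
  split_ifs <;> grind

lemma exists_partition_perm_apply_eq_moveBox_of_add_two_le (hx : PartitionOn n x)
    (hj0 : 0 < j) (hjn : j < n) (hgap : x j + 2 ≤ x 0) :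
    ∃ u, PartitionOn n u ∧ psize n u = psize n x ∧ x 0 - 1 ≤ u 0 ∧ u 0 ≤ x 0 ∧
      trunc x (x 0 - 1) ≤ u ∧
      ∃ τ : Equiv.Perm (Fin n), ∀ m : Fin n, u (τ m) = moveBox x 0 j m := by
  -- the box leaves the last row of length `x 0` and joins the first row of length `x j`
  set p := conj x (x 0)
  set q := conj x (x j + 1)
  have hp := lt_conj_iff hx (m := x 0) (by omega)
  have hq := lt_conj_iff hx (m := x j + 1) (by omega)
  have hp0 : 0 < p := (hp 0).2 le_rfl
  have hpq : p ≤ q := not_lt.1 fun hqp => lt_irrefl q ((hq q).2 (by have := (hp q).1 hqp; omega))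
  have hqj : q ≤ j := not_lt.1 fun hjq => by have := (hq j).1 hjq; omega
  have hxp1 : x (p - 1) = x 0 := le_antisymm (hx.1 0 _ (Nat.zero_le _)) ((hp _).1 (by omega))
  have hxp : x p < x 0 := lt_of_not_ge fun h => lt_irrefl p ((hp p).2 h)
  have hxq : x q = x j := le_antisymm (by have := (hq q).not.1 (lt_irrefl q); omega) (hx.1 q j hqj)
  have hxq1 : x j < x (q - 1) := (hq (q - 1)).1 (by omega)
  set τ : Equiv.Perm (Fin n) :=
    Equiv.swap ⟨j, hjn⟩ ⟨q, by omega⟩ * Equiv.swap ⟨0, by omega⟩ ⟨p - 1, by omega⟩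
  have hτ : ∀ m, x (τ m) = x m := fun m =>
    (apply_swap_eq_self hxq.symm _).trans (apply_swap_eq_self hxp1.symm m)
  have hτ0 : τ ⟨0, by omega⟩ = ⟨p - 1, by omega⟩ := by
    rw [Equiv.Perm.mul_apply, Equiv.swap_apply_left, Equiv.swap_apply_of_ne_of_ne] <;>
      simp only [ne_eq, Fin.ext_iff] <;> omega
  have hτj : τ ⟨j, hjn⟩ = ⟨q, by omega⟩ := by
    rw [Equiv.Perm.mul_apply, Equiv.swap_apply_of_ne_of_ne (a := (⟨0, by omega⟩ : Fin n)),
      Equiv.swap_apply_left] <;>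
      simp only [ne_eq, Fin.ext_iff] <;> omega
  refine ⟨moveBox x (p - 1) q, ?_, psize_moveBox (by omega) (by omega) (by omega) (by omega),
    ?_, ?_, hxp1 ▸ trunc_le_moveBox, τ, fun m => ?_⟩
  · refine hx.moveBox (by omega) (by omega) ?_ (by rwa [hxq]) (by omega)
    rwa [Nat.sub_add_cancel hp0, hxp1]
  · simp only [moveBox]
    split_ifs <;> omega
  · simp only [moveBox]
    split_ifs <;> omega
  · have := moveBox_apply_perm hτ ⟨0, by omega⟩ ⟨j, hjn⟩ m
    rwa [hτ0, hτj] at this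

lemma exists_partition_perm_apply_eq_moveBox (hx : PartitionOn n x) (hj0 : 0 < j) (hjn : j < n)
    (hjx : x j < x 0) :
    ∃ u, PartitionOn n u ∧ psize n u = psize n x ∧ x 0 - 1 ≤ u 0 ∧ u 0 ≤ x 0 ∧
      trunc x (x 0 - 1) ≤ u ∧
      ∃ τ : Equiv.Perm (Fin n), ∀ m : Fin n, u (τ m) = moveBox x 0 j m := by
  rcases (show x j + 1 = x 0 ∨ x j + 2 ≤ x 0 by omega) with hadj | hgap
  · exact ⟨x, hx, rfl, by omega, le_rfl, fun m => min_le_left _ _,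
      exists_perm_apply_eq_moveBox_of_add_one_eq hjn hadj⟩
  · exact exists_partition_perm_apply_eq_moveBox_of_add_two_le hx hj0 hjn hgap

end Rearrangement

theorem stmt_10_general {k : Type*} [Field k] (n r : ℕ)
    (Xs : Set (ℕ → ℕ)) (hXs : ∀ x ∈ Xs, PartitionOn n x)
    (hsize : ∀ x ∈ Xs, psize n x = r)
    (hreg : ∀ zl ∈ ZX n Xs, psize n zl.1 + zl.2 + 1 ≤ r) :
    SymShifted k n (IXset k n Xs) := by
  intro x hx hmem j hj0 hjn hjx
  obtain ⟨w, hw, σ, hwσ⟩ := (mon_mem_IXset_iff_s10 Xs x).1 hmem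
  have hwx : w ≤ x := (hXs w hw).le_of_comp_perm_le hx σ hwσ
  obtain ⟨u, hu, hux, hu0, hu0', hxu, τ, hτ⟩ :=
    exists_partition_perm_apply_eq_moveBox hx hj0 hjn hjx
  have hru : r ≤ psize n u := hux ▸ hsize w hw ▸ Finset.sum_le_sum fun i _ => hwx i
  obtain ⟨v, hv, hvu⟩ := exists_le_of_trunc_le hXs hreg hu hru hu0 (by omega) hw
    fun m => (min_le_min_right _ (hwx m)).trans (hxu m)
  exact (mon_mem_IXset_iff_s10 Xs (moveBox x 0 j)).2 ⟨v, hv, τ, fun m => hτ m ▸ hvu _⟩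

theorem stmt_10 {k : Type*} [Field k] (n r : ℕ) (hr : 1 ≤ r)
    (Xs : Set (ℕ → ℕ)) (hne : Xs.Nonempty) (hXs : ∀ x ∈ Xs, PartitionOn n x)
    (hsize : ∀ x ∈ Xs, psize n x = r)
    (hreg : ∀ zl ∈ ZX n Xs, psize n zl.1 + zl.2 + 1 ≤ r) :
    SymShifted k n (IXset k n Xs) :=
  stmt_10_general n r Xs hXs hsize hreg
end
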